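/- arXiv:1909.06207 — 3 statements merged into one kernel-verified Lean document; each statement's English description precedes it below -/
import Mathlib

section
/- Interval Newton-Moore existence: let X = ∏_{i=1}^n [a_i,b_i] ⊂ ℝ^n be a product of compact intervals, F : ℝ^n → ℝ^n be C¹, and x₀ ∈ X. Suppose A is a set of n×n matrices containing DF(x) for every x ∈ X, every A ∈ 𝒜 is invertible, and for some fixed invertible matrix representative the Newton set N(x₀,X) = {x₀ - A⁻¹ F(x₀) : A ∈ 𝒜} satisfies N(x₀,X) ⊆ interior(X). Then F has a zero x* ∈ X, and moreover x* ∈ N(x₀,X). -/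
/-!
Continuation along the Newton homotopy `F x = (1 - t) • F x₀`, `t ∈ [0, 1]`, takes the place of
Brouwer's fixed point theorem. The levels `t` attained by a solution in `X` form a compact set
containing `0`. By the mean value theorem, with `𝒜` closed and convex, a solution at a level
`t > 0` is `x₀ + t • (y - x₀)` for some `y` in the Newton set, so it lies in the interior of `X`,
and the inverse function theorem continues it to all nearby levels. At level `0` the solution `x₀`
may lie on the boundary of `X`, but the curve of solutions leaves it in the Newton direction, which
points into the interior. Hence level `1` is attained, by a zero of `F` that equals its `y`.
-/

open Set Filter Topology MeasureTheory

theorem IsCompact.exists_ge_of_forall_exists_gt {α : Type*} [LinearOrder α] [TopologicalSpace α]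
    [ClosedIciTopology α] {S : Set α} (hS : IsCompact S) (hne : S.Nonempty) {b : α}
    (h : ∀ τ ∈ S, τ < b → ∃ t ∈ S, τ < t) : ∃ τ ∈ S, b ≤ τ := by
  obtain ⟨τ, hτS, hmax⟩ := hS.exists_isGreatest hne
  refine ⟨τ, hτS, not_lt.1 fun hτb => ?_⟩
  obtain ⟨t, htS, hτt⟩ := h τ hτS hτb
  exact (hmax htS).not_gt hτt

theorem isCompact_setOf_exists_eq_smul {E G : Type*} [TopologicalSpace E] [NormedAddCommGroup G]
    [NormedSpace ℝ G] {F : E → G} (hF : Continuous F) {X : Set E}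
    (hX : IsCompact X) (v : G) : IsCompact {t ∈ Icc (0 : ℝ) 1 | ∃ x ∈ X, F x = (1 - t) • v} := by
  have hC : IsCompact ({p : ℝ × E | F p.2 = (1 - p.1) • v} ∩ Icc 0 1 ×ˢ X) :=
    (isCompact_Icc.prod hX).inter_left (isClosed_eq (by fun_prop) (by fun_prop))
  convert hC.image continuous_fst using 1
  ext t
  simp only [mem_ofPred_eq, mem_image, mem_inter_iff, mem_prod, Prod.exists, exists_and_right,
    exists_eq_right]
  aesop

variable {E G : Type*} [NormedAddCommGroup E] [NormedSpace ℝ E]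
  [NormedAddCommGroup G] [NormedSpace ℝ G]

theorem Convex.eventually_mem_interior_of_hasDerivWithinAt {X : Set E} (hX : Convex ℝ X)
    {c : ℝ → E} {p : E} (hc0 : c 0 ∈ closure X) (hp : p ∈ interior X)
    (hc : HasDerivWithinAt c (p - c 0) (Ioi 0) 0) : ∀ᶠ t in 𝓝[>] 0, c t ∈ interior X := by
  have hslope : Tendsto (fun t => c 0 + t⁻¹ • (c t - c 0)) (𝓝[>] 0) (𝓝 p) := by
    have := ((hasDerivWithinAt_iff_tendsto_slope' (lt_irrefl 0)).1 hc).const_add (c 0)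
    simp only [slope_def_module, sub_zero, add_sub_cancel] at this
    exact this
  filter_upwards [hslope.eventually (isOpen_interior.mem_nhds hp), Ioo_mem_nhdsGT one_pos]
    with t hq ht
  have hct : c t = (1 - t) • c 0 + t • (c 0 + t⁻¹ • (c t - c 0)) := by
    rw [smul_add, smul_smul, mul_inv_cancel₀ ht.1.ne']
    module
  rw [hct]
  exact hX.combo_closure_interior_mem_interior hc0 hq (by linarith [ht.2]) ht.1 (by ring)

/-- For invertible `A`, the condition `A (x₀ - y) = v` says `y = x₀ - A⁻¹ v`. -/
def newtonSet (𝒜 : Set (E →L[ℝ] G)) (x₀ : E) (v : G) : Set E :=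
  {y | ∃ A ∈ 𝒜, A (x₀ - y) = v}

section MeanValue

variable [CompleteSpace G]

theorem exists_sub_eq_apply_of_fderiv_mem {F : E → G} (hF : ContDiff ℝ 1 F)
    {𝒜 : Set (E →L[ℝ] G)} (h𝒜 : IsClosed 𝒜) (h𝒜conv : Convex ℝ 𝒜) {x₀ x : E}
    (hseg : ∀ z ∈ segment ℝ x₀ x, fderiv ℝ F z ∈ 𝒜) : ∃ A ∈ 𝒜, F x - F x₀ = A (x - x₀) := by
  set γ : ℝ → E := fun t => x₀ + t • (x - x₀)
  have hγ : ∀ t ∈ Icc (0 : ℝ) 1, fderiv ℝ F (γ t) ∈ 𝒜 := fun t ht =>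
    hseg _ (segment_eq_image' ℝ x₀ x ▸ mem_image_of_mem γ ht)
  have hcont : Continuous fun t => fderiv ℝ F (γ t) :=
    (hF.continuous_fderiv one_ne_zero).comp (by fun_prop)
  refine ⟨∫ t in (0 : ℝ)..1, fderiv ℝ F (γ t), ?_, ?_⟩
  · have : IsProbabilityMeasure (volume.restrict (Ioc (0 : ℝ) 1)) := ⟨by simp⟩
    rw [intervalIntegral.integral_of_le zero_le_one]
    refine h𝒜conv.integral_mem h𝒜 ?_ hcont.integrableOn_Ioc
    rw [ae_restrict_iff' measurableSet_Ioc]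
    exact ae_of_all _ fun t ht => hγ t (Ioc_subset_Icc_self ht)
  · have hderiv : ∀ t ∈ uIcc (0 : ℝ) 1, HasDerivAt (F ∘ γ) (fderiv ℝ F (γ t) (x - x₀)) t :=
      fun t _ => (hF.differentiable one_ne_zero (γ t)).hasFDerivAt.comp_hasDerivAt t
        (by simpa only [one_smul] using ((hasDerivAt_id' t).smul_const (x - x₀)).const_add x₀)
    rw [ContinuousLinearMap.intervalIntegral_apply (hcont.intervalIntegrable 0 1),
      intervalIntegral.integral_eq_sub_of_hasDerivAt hderiv
        ((hcont.clm_apply continuous_const).intervalIntegrable 0 1)]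
    simp [γ]

theorem exists_mem_newtonSet_eq_of_eq_smul {F : E → G} (hF : ContDiff ℝ 1 F) {X : Set E}
    (hX : Convex ℝ X) {𝒜 : Set (E →L[ℝ] G)} (h𝒜 : IsClosed 𝒜) (h𝒜conv : Convex ℝ 𝒜)
    (hDF : ∀ x ∈ X, fderiv ℝ F x ∈ 𝒜) {x₀ x : E} (hx₀ : x₀ ∈ X) (hx : x ∈ X) {t : ℝ}
    (ht : t ≠ 0) (hFx : F x = (1 - t) • F x₀) :
    ∃ y ∈ newtonSet 𝒜 x₀ (F x₀), x = x₀ + t • (y - x₀) := by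
  obtain ⟨A, hA, hAx⟩ := exists_sub_eq_apply_of_fderiv_mem hF h𝒜 h𝒜conv
    fun z hz => hDF z (hX.segment_subset hx₀ hx hz)
  refine ⟨x₀ + t⁻¹ • (x - x₀), ⟨A, hA, ?_⟩, ?_⟩
  · rw [sub_add_cancel_left, map_neg, map_smul, ← hAx, hFx, sub_smul, one_smul,
      sub_sub_cancel_left, smul_neg, smul_smul, inv_mul_cancel₀ ht, one_smul, neg_neg]
  · rw [add_sub_cancel_left, smul_smul, mul_inv_cancel₀ ht, one_smul, add_sub_cancel]

theorem mem_interior_of_eq_smul {F : E → G} (hF : ContDiff ℝ 1 F) {X : Set E}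
    (hX : Convex ℝ X) {𝒜 : Set (E →L[ℝ] G)} (h𝒜 : IsClosed 𝒜) (h𝒜conv : Convex ℝ 𝒜)
    (hDF : ∀ x ∈ X, fderiv ℝ F x ∈ 𝒜) {x₀ x : E} (hx₀ : x₀ ∈ X) (hx : x ∈ X)
    (hN : newtonSet 𝒜 x₀ (F x₀) ⊆ interior X) {t : ℝ} (ht : 0 < t) (ht1 : t ≤ 1)
    (hFx : F x = (1 - t) • F x₀) : x ∈ interior X := by
  obtain ⟨y, hy, rfl⟩ :=
    exists_mem_newtonSet_eq_of_eq_smul hF hX h𝒜 h𝒜conv hDF hx₀ hx ht.ne' hFx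
  have hcombo : x₀ + t • (y - x₀) = (1 - t) • x₀ + t • y := by module
  rw [hcombo]
  exact hX.combo_closure_interior_mem_interior (subset_closure hx₀) (hN hy) (by linarith) ht
    (by ring)

end MeanValue

section LocalInverse

variable [CompleteSpace E]

theorem HasStrictFDerivAt.exists_hasDerivAt_eventually_eq_smul {F : E → G} {e : E ≃L[ℝ] G}
    {x : E} (hF : HasStrictFDerivAt F (e : E →L[ℝ] G) x) {τ : ℝ} {v : G}
    (hFx : F x = (1 - τ) • v) :
    ∃ c : ℝ → E, c τ = x ∧ HasDerivAt c (-e.symm v) τ ∧ ∀ᶠ t in 𝓝 τ, F (c t) = (1 - t) • v := by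
  have hw : HasDerivAt (fun t : ℝ => (1 - t) • v) (-v) τ := by
    simpa using ((hasDerivAt_id τ).const_sub 1).smul_const v
  have hinv := hF.to_localInverse.hasFDerivAt
  have hright := hF.eventually_right_inverse
  rw [hFx] at hinv hright
  refine ⟨hF.localInverse F e x ∘ fun t => (1 - t) • v, ?_, ?_, ?_⟩
  · simp [← hFx]
  · rw [← map_neg]
    exact hinv.comp_hasDerivAt τ hw
  · exact hw.continuousAt.tendsto.eventually hright

theorem eventually_exists_eq_smul_of_mem_interior {F : E → G} {e : E ≃L[ℝ] G} {x : E}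
    (hF : HasStrictFDerivAt F (e : E →L[ℝ] G) x) {X : Set E} (hx : x ∈ interior X) {τ : ℝ}
    {v : G} (hFx : F x = (1 - τ) • v) : ∀ᶠ t in 𝓝 τ, ∃ y ∈ X, F y = (1 - t) • v := by
  obtain ⟨c, hcτ, hc, hFc⟩ := hF.exists_hasDerivAt_eventually_eq_smul hFx
  have hcX : ∀ᶠ t in 𝓝 τ, c t ∈ interior X :=
    hc.continuousAt.eventually_mem (hcτ ▸ isOpen_interior.mem_nhds hx)
  filter_upwards [hcX, hFc] with t hct hFct using ⟨c t, interior_subset hct, hFct⟩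

theorem eventually_exists_eq_smul_of_newton_mem_interior {F : E → G} {e : E ≃L[ℝ] G} {x₀ : E}
    (hF : HasStrictFDerivAt F (e : E →L[ℝ] G) x₀) {X : Set E} (hX : Convex ℝ X)
    (hx₀ : x₀ ∈ closure X) (hp : x₀ - e.symm (F x₀) ∈ interior X) :
    ∀ᶠ t in 𝓝[>] (0 : ℝ), ∃ y ∈ X, F y = (1 - t) • F x₀ := by
  obtain ⟨c, hc0, hc, hFc⟩ :=
    hF.exists_hasDerivAt_eventually_eq_smul (τ := 0) (v := F x₀) (by simp)
  have hc' : HasDerivWithinAt c (x₀ - e.symm (F x₀) - c 0) (Ioi 0) 0 := by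
    rw [hc0, sub_sub_cancel_left]
    exact hc.hasDerivWithinAt
  filter_upwards [hX.eventually_mem_interior_of_hasDerivWithinAt (hc0 ▸ hx₀) hp hc',
    hFc.filter_mono nhdsWithin_le_nhds] with t hct hFct using ⟨c t, interior_subset hct, hFct⟩

end LocalInverse

theorem exists_zero_mem_newtonSet [CompleteSpace E] {F : E → E} (hF : ContDiff ℝ 1 F)
    {X : Set E} (hXc : IsCompact X) (hX : Convex ℝ X) {𝒜 : Set (E →L[ℝ] E)} (h𝒜 : IsClosed 𝒜)
    (h𝒜conv : Convex ℝ 𝒜) (hDF : ∀ x ∈ X, fderiv ℝ F x ∈ 𝒜)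
    (hinv : ∀ x ∈ X, IsUnit (fderiv ℝ F x)) {x₀ : E} (hx₀ : x₀ ∈ X)
    (hN : newtonSet 𝒜 x₀ (F x₀) ⊆ interior X) : ∃ x ∈ X, F x = 0 ∧ x ∈ newtonSet 𝒜 x₀ (F x₀) := by
  have hstrict : ∀ x (hx : x ∈ X), HasStrictFDerivAt F
      (ContinuousLinearEquiv.unitsEquiv ℝ E (hinv x hx).unit : E →L[ℝ] E) x :=
    fun x _ => hF.contDiffAt.hasStrictFDerivAt one_ne_zero
  set S := {t ∈ Icc (0 : ℝ) 1 | ∃ x ∈ X, F x = (1 - t) • F x₀}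
  have hstep : ∀ τ ∈ S, τ < 1 → ∃ t ∈ S, τ < t := by
    rintro τ ⟨hτ, x, hx, hFx⟩ hτ1
    have hlevel : ∀ᶠ t in 𝓝[>] τ, ∃ y ∈ X, F y = (1 - t) • F x₀ := by
      rcases hτ.1.eq_or_lt with rfl | hτ0
      · refine eventually_exists_eq_smul_of_newton_mem_interior (hstrict x₀ hx₀) hX
          (subset_closure hx₀) (hN ⟨_, hDF x₀ hx₀, ?_⟩)
        rw [_root_.sub_sub_cancel]
        exact (ContinuousLinearEquiv.unitsEquiv ℝ E (hinv x₀ hx₀).unit).apply_symm_apply (F x₀)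
      · exact (eventually_exists_eq_smul_of_mem_interior (hstrict x hx)
          (mem_interior_of_eq_smul hF hX h𝒜 h𝒜conv hDF hx₀ hx hN hτ0 hτ.2 hFx) hFx).filter_mono
          nhdsWithin_le_nhds
    obtain ⟨t, hy, hτt, ht1⟩ := (hlevel.and (Ioo_mem_nhdsGT hτ1)).exists
    exact ⟨t, ⟨⟨hτ.1.trans hτt.le, ht1.le⟩, hy⟩, hτt⟩
  obtain ⟨τ, ⟨hτ, x, hx, hFx⟩, hτ1⟩ := (isCompact_setOf_exists_eq_smul hF.continuous hXc _)
    |>.exists_ge_of_forall_exists_gt ⟨0, ⟨left_mem_Icc.2 zero_le_one, x₀, hx₀, by simp⟩⟩ hstep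
  obtain rfl : τ = 1 := le_antisymm hτ.2 hτ1
  obtain ⟨y, hy, rfl⟩ :=
    exists_mem_newtonSet_eq_of_eq_smul hF hX h𝒜 h𝒜conv hDF hx₀ hx one_ne_zero hFx
  exact ⟨_, hx, by simpa using hFx, by simpa using hy⟩

theorem Matrix.eq_sub_inv_mulVec_of_mulVec_sub_eq {ι : Type*} [Fintype ι] [DecidableEq ι]
    {A : Matrix ι ι ℝ} (hA : IsUnit A) {x₀ y v : ι → ℝ} (h : A.mulVec (x₀ - y) = v) :
    y = x₀ - (A⁻¹).mulVec v := by
  have := hA.invertible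
  rw [Matrix.inv_mulVec_eq_vec h.symm, sub_sub_cancel]

theorem interval_newton_moore_existence_general
    (n : ℕ) (a b : Fin n → ℝ)
    (F : (Fin n → ℝ) → (Fin n → ℝ))
    (Df : (Fin n → ℝ) → Matrix (Fin n) (Fin n) ℝ)
    (X : Set (Fin n → ℝ))
    (hX : X = Set.univ.pi fun i => Set.Icc (a i) (b i))
    (hF : ContDiff ℝ 1 F)
    (hDf : ∀ x, HasFDerivAt F (LinearMap.toContinuousLinearMap (Df x).mulVecLin) x)
    (𝒜 : Set (Matrix (Fin n) (Fin n) ℝ))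
    (h𝒜comp : IsCompact 𝒜) (h𝒜conv : Convex ℝ 𝒜)
    (h𝒜inv : ∀ A ∈ 𝒜, IsUnit A)
    (h𝒜encl : ∀ x ∈ X, Df x ∈ 𝒜)
    (x₀ : Fin n → ℝ) (hx₀ : x₀ ∈ X)
    (N : Set (Fin n → ℝ))
    (hN : N = {y | ∃ A ∈ 𝒜, y = x₀ - (A⁻¹).mulVec (F x₀)})
    (hNX : N ⊆ interior X) :
    ∃ x' ∈ X, F x' = 0 ∧ x' ∈ N := by
  let Φ : Matrix (Fin n) (Fin n) ℝ ≃ₐ[ℝ] ((Fin n → ℝ) →L[ℝ] (Fin n → ℝ)) :=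
    Matrix.toLinAlgEquiv'.trans (Module.End.toContinuousLinearMap _)
  have hfderiv : ∀ x, fderiv ℝ F x = Φ (Df x) := fun x => (hDf x).fderiv
  have hNewton : newtonSet (Φ '' 𝒜) x₀ (F x₀) ⊆ N := by
    rintro y ⟨_, ⟨A, hA, rfl⟩, hAy⟩
    rw [hN]
    exact ⟨A, hA, Matrix.eq_sub_inv_mulVec_of_mulVec_sub_eq (h𝒜inv A hA) hAy⟩
  have hXc : IsCompact X := hX ▸ isCompact_univ_pi fun i => isCompact_Icc
  have hXconv : Convex ℝ X := hX ▸ convex_pi fun i _ => convex_Icc (a i) (b i)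
  have hΦ𝒜 : IsClosed (Φ '' 𝒜) :=
    (h𝒜comp.image (LinearMap.continuous_of_finiteDimensional Φ.toLinearMap)).isClosed
  obtain ⟨x, hx, hFx, hxN⟩ := exists_zero_mem_newtonSet hF hXc hXconv hΦ𝒜
    (h𝒜conv.linear_image Φ.toLinearMap)
    (fun x hx => hfderiv x ▸ mem_image_of_mem Φ (h𝒜encl x hx))
    (fun x hx => hfderiv x ▸ (h𝒜inv _ (h𝒜encl x hx)).map Φ) hx₀ (hNewton.trans hNX)
  exact ⟨x, hx, hFx, hNewton hxN⟩

/-- Interval Newton–Moore method, existence part: if the interval Newton set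
`N(x₀,X) = {x₀ - A⁻¹ F(x₀) : A ∈ 𝒜}` is contained in the interior of the box `X`,
then `F` has a zero in `X`, which moreover belongs to `N(x₀,X)`. -/
theorem interval_newton_moore_existence
    (n : ℕ) (a b : Fin n → ℝ) (hab : ∀ i, a i ≤ b i)
    (F : (Fin n → ℝ) → (Fin n → ℝ))
    (Df : (Fin n → ℝ) → Matrix (Fin n) (Fin n) ℝ)
    (X : Set (Fin n → ℝ))
    (hX : X = Set.univ.pi fun i => Set.Icc (a i) (b i))
    (hF : ContDiff ℝ 1 F)
    (hDf : ∀ x, HasFDerivAt F (LinearMap.toContinuousLinearMap (Df x).mulVecLin) x)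
    (𝒜 : Set (Matrix (Fin n) (Fin n) ℝ))
    (h𝒜comp : IsCompact 𝒜) (h𝒜conv : Convex ℝ 𝒜)
    (h𝒜inv : ∀ A ∈ 𝒜, IsUnit A)
    (h𝒜encl : ∀ x ∈ X, Df x ∈ 𝒜)
    (x₀ : Fin n → ℝ) (hx₀ : x₀ ∈ X)
    (N : Set (Fin n → ℝ))
    (hN : N = {y | ∃ A ∈ 𝒜, y = x₀ - (A⁻¹).mulVec (F x₀)})
    (hNX : N ⊆ interior X) :
    ∃ x' ∈ X, F x' = 0 ∧ x' ∈ N :=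
  interval_newton_moore_existence_general n a b F Df X hX hF hDf 𝒜 h𝒜comp h𝒜conv h𝒜inv h𝒜encl x₀ hx₀
    N hN hNX
end

section
/- Interval Newton-Moore nonexistence: with X, F, x₀ and the Newton operator N(x₀,X) as in the interval Newton method, if N(x₀,X) ∩ X = ∅ then F(x) ≠ 0 for all x ∈ X. -/
/-!
If `F x = 0` for some `x ∈ X`, the mean value theorem along the segment `[x₀, x]`, run through
a separating functional, puts `F x - F x₀` in the compact convex set `{A (x - x₀) : A ∈ 𝒜}`.
So `A (x - x₀) = -F x₀` for some `A ∈ 𝒜`, i.e. `x = x₀ - A⁻¹ F x₀ ∈ N(x₀, X) ∩ X`.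
-/

open Set Matrix

theorem sub_mem_of_hasDerivAt_mem {E : Type*} [NormedAddCommGroup E] [NormedSpace ℝ E]
    {f f' : ℝ → E} {K : Set E} (hKconv : Convex ℝ K) (hKclosed : IsClosed K)
    (hf : ContinuousOn f (Icc 0 1)) (hf' : ∀ t ∈ Ioo (0 : ℝ) 1, HasDerivAt f (f' t) t)
    (hK : ∀ t ∈ Ioo (0 : ℝ) 1, f' t ∈ K) :
    f 1 - f 0 ∈ K := by
  by_contra hnot
  obtain ⟨ℓ, u, hℓK, hℓu⟩ := geometric_hahn_banach_closed_point hKconv hKclosed hnot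
  obtain ⟨c, hc, hslope⟩ := exists_hasDerivAt_eq_slope (ℓ ∘ f) (fun t => ℓ (f' t)) zero_lt_one
    (ℓ.continuous.comp_continuousOn hf) fun t ht => ℓ.hasFDerivAt.comp_hasDerivAt t (hf' t ht)
  have : ℓ (f' c) = ℓ (f 1 - f 0) := by simpa using hslope
  linarith [hℓK _ (hK c hc)]

theorem sub_mem_of_hasFDerivAt_mem {E G : Type*} [NormedAddCommGroup E]
    [NormedSpace ℝ E] [NormedAddCommGroup G] [NormedSpace ℝ G]
    {F : E → G} {F' : E → E →L[ℝ] G} {x y : E} {K : Set G} (hKconv : Convex ℝ K)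
    (hKclosed : IsClosed K) (hF : ∀ z ∈ segment ℝ x y, HasFDerivAt F (F' z) z)
    (hK : ∀ z ∈ segment ℝ x y, F' z (y - x) ∈ K) :
    F y - F x ∈ K := by
  set p : ℝ → E := fun t => x + t • (y - x)
  have hp : ∀ t ∈ Icc (0 : ℝ) 1, p t ∈ segment ℝ x y := fun t ht =>
    segment_eq_image' ℝ x y ▸ mem_image_of_mem p ht
  have hderiv : ∀ t ∈ Icc (0 : ℝ) 1, HasDerivAt (F ∘ p) (F' (p t) (y - x)) t := fun t ht =>
    (hF _ (hp t ht)).comp_hasDerivAt t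
      ((((hasDerivAt_id t).smul_const (y - x)).const_add x).congr_deriv (one_smul ℝ _))
  simpa [p] using sub_mem_of_hasDerivAt_mem hKconv hKclosed
    (fun t ht => (hderiv t ht).continuousAt.continuousWithinAt)
    (fun t ht => hderiv t (Ioo_subset_Icc_self ht))
    (fun t ht => hK _ (hp t (Ioo_subset_Icc_self ht)))

theorem Matrix.exists_mem_mulVec_sub_eq_of_hasFDerivAt {m n : Type*} [Fintype m] [Fintype n]
    {F : (n → ℝ) → m → ℝ} {Df : (n → ℝ) → Matrix m n ℝ} {s : Set (n → ℝ)}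
    {𝒜 : Set (Matrix m n ℝ)} (hs : Convex ℝ s)
    (hDf : ∀ z ∈ s, HasFDerivAt F (LinearMap.toContinuousLinearMap (Df z).mulVecLin) z)
    (h𝒜comp : IsCompact 𝒜) (h𝒜conv : Convex ℝ 𝒜) (h𝒜encl : ∀ z ∈ s, Df z ∈ 𝒜)
    {x y : n → ℝ} (hx : x ∈ s) (hy : y ∈ s) :
    ∃ A ∈ 𝒜, F y - F x = A *ᵥ (y - x) := by
  have hseg := hs.segment_subset hx hy
  have hKcomp : IsCompact ((· *ᵥ (y - x)) '' 𝒜) := h𝒜comp.image (by fun_prop)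
  have hKconv : Convex ℝ ((· *ᵥ (y - x)) '' 𝒜) :=
    h𝒜conv.is_linear_image ⟨fun A B => add_mulVec A B _, fun c A => smul_mulVec c A _⟩
  simpa [eq_comm] using sub_mem_of_hasFDerivAt_mem hKconv hKcomp.isClosed
    (fun z hz => hDf z (hseg hz)) (fun z hz => mem_image_of_mem _ (h𝒜encl z (hseg hz)))

theorem interval_newton_moore_nonexistence_general
    (n : ℕ) (a b : Fin n → ℝ)
    (F : (Fin n → ℝ) → (Fin n → ℝ))
    (Df : (Fin n → ℝ) → Matrix (Fin n) (Fin n) ℝ)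
    (X : Set (Fin n → ℝ))
    (hX : X = Set.univ.pi fun i => Set.Icc (a i) (b i))
    (hDf : ∀ x, HasFDerivAt F (LinearMap.toContinuousLinearMap (Df x).mulVecLin) x)
    (𝒜 : Set (Matrix (Fin n) (Fin n) ℝ))
    (h𝒜comp : IsCompact 𝒜) (h𝒜conv : Convex ℝ 𝒜)
    (h𝒜inv : ∀ A ∈ 𝒜, IsUnit A)
    (h𝒜encl : ∀ x ∈ X, Df x ∈ 𝒜)
    (x₀ : Fin n → ℝ) (hx₀ : x₀ ∈ X)
    (N : Set (Fin n → ℝ))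
    (hN : N = {y | ∃ A ∈ 𝒜, y = x₀ - (A⁻¹).mulVec (F x₀)})
    (hNX : N ∩ X = ∅) :
    ∀ x ∈ X, F x ≠ 0 := by
  intro x hx hFx
  have hXconv : Convex ℝ X := hX ▸ convex_pi fun i _ => convex_Icc (a i) (b i)
  obtain ⟨A, hA, hmvt⟩ := exists_mem_mulVec_sub_eq_of_hasFDerivAt hXconv (fun z _ => hDf z)
    h𝒜comp h𝒜conv h𝒜encl hx₀ hx
  have hAinv : A⁻¹ * A = 1 := nonsing_inv_mul A ((isUnit_iff_isUnit_det A).mp (h𝒜inv A hA))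
  have hxN : x = x₀ - A⁻¹ *ᵥ F x₀ := by
    have := congrArg (A⁻¹ *ᵥ ·) hmvt
    simp only [hFx, zero_sub, mulVec_neg, mulVec_mulVec, hAinv, one_mulVec] at this
    rw [sub_eq_add_neg, this, add_sub_cancel]
  exact (Set.eq_empty_iff_forall_notMem.mp hNX) x ⟨hN ▸ ⟨A, hA, hxN⟩, hx⟩

/-- Interval Newton–Moore method, nonexistence part: if the interval Newton set
`N(x₀,X)` is disjoint from the box `X`, then `F` has no zero in `X`. -/
theorem interval_newton_moore_nonexistence
    (n : ℕ) (a b : Fin n → ℝ) (hab : ∀ i, a i ≤ b i)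
    (F : (Fin n → ℝ) → (Fin n → ℝ))
    (Df : (Fin n → ℝ) → Matrix (Fin n) (Fin n) ℝ)
    (X : Set (Fin n → ℝ))
    (hX : X = Set.univ.pi fun i => Set.Icc (a i) (b i))
    (hF : ContDiff ℝ 1 F)
    (hDf : ∀ x, HasFDerivAt F (LinearMap.toContinuousLinearMap (Df x).mulVecLin) x)
    (𝒜 : Set (Matrix (Fin n) (Fin n) ℝ))
    (h𝒜comp : IsCompact 𝒜) (h𝒜conv : Convex ℝ 𝒜)
    (h𝒜inv : ∀ A ∈ 𝒜, IsUnit A)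
    (h𝒜encl : ∀ x ∈ X, Df x ∈ 𝒜)
    (x₀ : Fin n → ℝ) (hx₀ : x₀ ∈ X)
    (N : Set (Fin n → ℝ))
    (hN : N = {y | ∃ A ∈ 𝒜, y = x₀ - (A⁻¹).mulVec (F x₀)})
    (hNX : N ∩ X = ∅) :
    ∀ x ∈ X, F x ≠ 0 :=
  interval_newton_moore_nonexistence_general n a b F Df X hX hDf 𝒜 h𝒜comp h𝒜conv h𝒜inv h𝒜encl x₀ hx₀
    N hN hNX
end

section
/- Positive definiteness of the symmetrized cone matrix implies the cone condition for flows: if Q is a symmetric n×n matrix, f_c : ℝ^n → ℝ^n is C¹, B ⊂ ℝ^n is convex, and Q·Df_c(x) + (Q·Df_c(x))^T is positive definite for every x ∈ B, then for any two distinct solutions x₁, x₂ of ẋ = f_c(x) with x₁(0), x₂(0) ∈ B and x₁(0) ≠ x₂(0), one has d/dt [ Q(x₁(t) − x₂(t)) ]|_{t=0} > 0, where Q(v) denotes v^T Q v. -/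
/-!
With `v = x₁(0) - x₂(0)` and `Q` symmetric, the derivative at `0` is `2 ⟨v, Q (f_c x₁(0) - f_c x₂(0))⟩`.
Along the segment `γ s = x₂(0) + s v ⊆ B` the function `s ↦ ⟨v, Q f_c(γ s)⟩` has derivative
`⟨v, Q Df_c(γ s) v⟩ = ½ vᵀ (Q Df_c + (Q Df_c)ᵀ) v > 0`, so by the mean value theorem its increment
over `[0, 1]`, which is `⟨v, Q (f_c x₁(0) - f_c x₂(0))⟩`, is positive.
-/

open Matrix Set

variable {ι : Type*} [Fintype ι]

theorem Matrix.IsSymm.dotProduct_mulVec_comm {R : Type*} [CommSemiring R] {Q : Matrix ι ι R}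
    (hQ : Q.IsSymm) (v w : ι → R) :
    v ⬝ᵥ Q *ᵥ w = w ⬝ᵥ Q *ᵥ v := by
  rw [dotProduct_mulVec, ← mulVec_transpose, hQ.eq, dotProduct_comm]

section Calculus

variable {𝕜 : Type*} [NontriviallyNormedField 𝕜] {u w : 𝕜 → ι → 𝕜} {u' w' : ι → 𝕜} {t : 𝕜}

theorem HasDerivAt.dotProduct (hu : HasDerivAt u u' t) (hw : HasDerivAt w w' t) :
    HasDerivAt (fun t => u t ⬝ᵥ w t) (u' ⬝ᵥ w t + u t ⬝ᵥ w') t := by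
  have h := HasDerivAt.fun_sum (u := Finset.univ) fun i _ =>
    (hasDerivAt_pi.1 hu i).fun_mul (hasDerivAt_pi.1 hw i)
  rwa [Finset.sum_add_distrib] at h

theorem HasDerivAt.matrix_mulVec {m : Type*} [Fintype m] (A : Matrix m ι 𝕜) (hu : HasDerivAt u u' t) :
    HasDerivAt (fun t => A *ᵥ u t) (A *ᵥ u') t :=
  hasDerivAt_pi.2 fun i => by
    simpa [mulVec] using (hasDerivAt_const t (A i)).dotProduct hu

theorem Matrix.IsSymm.hasDerivAt_dotProduct_mulVec_self {Q : Matrix ι ι 𝕜} (hQ : Q.IsSymm)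
    (hu : HasDerivAt u u' t) :
    HasDerivAt (fun t => u t ⬝ᵥ Q *ᵥ u t) (2 * (u t ⬝ᵥ Q *ᵥ u')) t := by
  convert hu.dotProduct (hu.matrix_mulVec Q) using 1
  rw [hQ.dotProduct_mulVec_comm u']
  ring

end Calculus

theorem Matrix.dotProduct_mulVec_pos_of_posDef_add_transpose {M : Matrix ι ι ℝ}
    (hM : (M + Mᵀ).PosDef) {v : ι → ℝ} (hv : v ≠ 0) : 0 < v ⬝ᵥ M *ᵥ v := by
  have h := hM.dotProduct_mulVec_pos hv
  rw [star_trivial, add_mulVec, dotProduct_add, mulVec_transpose, dotProduct_comm v (v ᵥ* M),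
    ← dotProduct_mulVec] at h
  linarith

theorem Convex.dotProduct_mulVec_sub_pos_of_posDef {Q : Matrix ι ι ℝ} {f : (ι → ℝ) → ι → ℝ}
    {Df : (ι → ℝ) → Matrix ι ι ℝ} {B : Set (ι → ℝ)} (hB : Convex ℝ B)
    (hDf : ∀ x ∈ B, HasFDerivAt f (Df x).mulVecLin.toContinuousLinearMap x)
    (hpos : ∀ x ∈ B, (Q * Df x + (Q * Df x)ᵀ).PosDef) {a b : ι → ℝ} (ha : a ∈ B) (hb : b ∈ B)
    (hab : a ≠ b) : 0 < (a - b) ⬝ᵥ Q *ᵥ (f a - f b) := by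
  set v := a - b
  have hγB : ∀ s ∈ Icc (0 : ℝ) 1, b + s • v ∈ B := fun s hs => hB.add_smul_sub_mem hb ha hs
  have hg : ∀ s ∈ Icc (0 : ℝ) 1, HasDerivAt (fun s : ℝ => v ⬝ᵥ Q *ᵥ f (b + s • v))
      (v ⬝ᵥ (Q * Df (b + s • v)) *ᵥ v) s := by
    intro s hs
    have hγ : HasDerivAt (fun s : ℝ => b + s • v) v s := by
      simpa using ((hasDerivAt_id s).smul_const v).const_add b
    have hfγ := ((hDf _ (hγB s hs)).comp_hasDerivAt s hγ).matrix_mulVec Q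
    simpa [← mulVec_mulVec] using (hasDerivAt_const s v).dotProduct hfγ
  obtain ⟨c, hc, hslope⟩ := exists_hasDerivAt_eq_slope _ _ zero_lt_one
    (fun s hs => (hg s hs).continuousAt.continuousWithinAt)
    (fun s hs => hg s (Ioo_subset_Icc_self hs))
  have hderiv_pos := dotProduct_mulVec_pos_of_posDef_add_transpose
    (hpos _ (hγB c (Ioo_subset_Icc_self hc))) (sub_ne_zero.2 hab)
  rw [hslope] at hderiv_pos
  simpa [v, mulVec_sub, dotProduct_sub] using hderiv_pos

theorem posdef_symmetrization_implies_cone_condition_for_flows_general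
    (n : ℕ) (Q : Matrix (Fin n) (Fin n) ℝ) (hQ : Q.IsSymm)
    (fc : (Fin n → ℝ) → (Fin n → ℝ))
    (Df : (Fin n → ℝ) → Matrix (Fin n) (Fin n) ℝ)
    (hDf : ∀ x, HasFDerivAt fc (LinearMap.toContinuousLinearMap (Df x).mulVecLin) x)
    (B : Set (Fin n → ℝ)) (hB : Convex ℝ B)
    (hpos : ∀ x ∈ B, (Q * Df x + (Q * Df x)ᵀ).PosDef)
    (x₁ x₂ : ℝ → Fin n → ℝ)
    (hx₁ : ∀ t, HasDerivAt x₁ (fc (x₁ t)) t)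
    (hx₂ : ∀ t, HasDerivAt x₂ (fc (x₂ t)) t)
    (h₁B : x₁ 0 ∈ B) (h₂B : x₂ 0 ∈ B) (hne : x₁ 0 ≠ x₂ 0) :
    deriv (fun t => (x₁ t - x₂ t) ⬝ᵥ Q.mulVec (x₁ t - x₂ t)) 0 > 0 := by
  rw [(hQ.hasDerivAt_dotProduct_mulVec_self ((hx₁ 0).fun_sub (hx₂ 0))).deriv]
  exact mul_pos two_pos
    (hB.dotProduct_mulVec_sub_pos_of_posDef (fun x _ => hDf x) hpos h₁B h₂B hne)

/-- Positive definiteness of the symmetrized cone matrix implies the cone condition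
for flows: if `Q·Df_c(x) + (Q·Df_c(x))ᵀ` is positive definite on a convex set `B`,
then for any two distinct solutions of `ẋ = f_c(x)` starting in `B`, the quadratic
form `Q(x₁ − x₂) = ⟨x₁ − x₂, Q(x₁ − x₂)⟩` is strictly increasing at `t = 0`. -/
theorem posdef_symmetrization_implies_cone_condition_for_flows
    (n : ℕ) (Q : Matrix (Fin n) (Fin n) ℝ) (hQ : Q.IsSymm)
    (fc : (Fin n → ℝ) → (Fin n → ℝ)) (hfc : ContDiff ℝ 1 fc)
    (Df : (Fin n → ℝ) → Matrix (Fin n) (Fin n) ℝ)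
    (hDf : ∀ x, HasFDerivAt fc (LinearMap.toContinuousLinearMap (Df x).mulVecLin) x)
    (B : Set (Fin n → ℝ)) (hB : Convex ℝ B)
    (hpos : ∀ x ∈ B, (Q * Df x + (Q * Df x)ᵀ).PosDef)
    (x₁ x₂ : ℝ → Fin n → ℝ)
    (hx₁ : ∀ t, HasDerivAt x₁ (fc (x₁ t)) t)
    (hx₂ : ∀ t, HasDerivAt x₂ (fc (x₂ t)) t)
    (h₁B : x₁ 0 ∈ B) (h₂B : x₂ 0 ∈ B) (hne : x₁ 0 ≠ x₂ 0) :
    deriv (fun t => (x₁ t - x₂ t) ⬝ᵥ Q.mulVec (x₁ t - x₂ t)) 0 > 0 :=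
  posdef_symmetrization_implies_cone_condition_for_flows_general n Q hQ fc Df hDf B hB hpos x₁ x₂
    hx₁ hx₂ h₁B h₂B hne
end
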